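/- Let (λ, x) be an eigenpair of a symmetric m-th order tensor A and α > β(A). Then x is a fixed point of the map φ(y) = (A y^{m−1} + α y)/‖A y^{m−1} + α y‖, and the Jacobian of φ at x equals J = [(m−1)(A x^{m−2} − λ x xᵀ) + α(I − x xᵀ)]/(λ + α). -/

import Mathlib

noncomputable section
open scoped BigOperators
open Metric Filter

abbrev En (n : ℕ) := EuclideanSpace ℝ (Fin n)

def Symm {m n : ℕ} (A : (Fin m → Fin n) → ℝ) : Prop :=
  ∀ (p : Equiv.Perm (Fin m)) (i : Fin m → Fin n), A (i ∘ p) = A i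

def tmul {m n : ℕ} (A : (Fin m → Fin n) → ℝ) (x : En n) : ℝ :=
  ∑ i : Fin m → Fin n, A i * ∏ k, x (i k)

def tvec {m n : ℕ} (A : (Fin (m+1) → Fin n) → ℝ) (x : En n) : En n :=
  WithLp.toLp 2 (fun j => ∑ i : Fin m → Fin n, A (Fin.cons j i) * ∏ k, x (i k))

def tmat {m n : ℕ} (A : (Fin (m+2) → Fin n) → ℝ) (x : En n) : Matrix (Fin n) (Fin n) ℝ :=
  fun j k => ∑ i : Fin m → Fin n, A (Fin.cons j (Fin.cons k i)) * ∏ l, x (i l)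

def quadForm {n : ℕ} (M : Matrix (Fin n) (Fin n) ℝ) (y : En n) : ℝ :=
  ∑ j, ∑ k, y j * M j k * y k

def srad {n : ℕ} (M : Matrix (Fin n) (Fin n) ℝ) : ℝ :=
  ⨆ y : sphere (0 : En n) 1, |quadForm M (y : En n)|

def beta {m n : ℕ} (A : (Fin (m+2) → Fin n) → ℝ) : ℝ :=
  ((m:ℝ)+1) * ⨆ x : sphere (0 : En n) 1, srad (tmat A (x : En n))

/-!
Indices are shifted with respect to the paper: `A` has order `m + 2`, so the paper's `m - 1`
is `m + 1` here and `tmat A x` is `A x^{m-2}`.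

The Rayleigh quotient `xᵀ (A x^{m-2}) x` of a unit eigenvector equals `λ`, so `|λ| ≤ β(A) < α`
and `A x^{m-1} + α x = (λ + α) x` is a positive multiple of `x`, which normalizes to `x`.
For the Jacobian use the chain rule: by symmetry of `A` the derivative of `y ↦ A y^{m-1}` is
`(m-1) A x^{m-2}`, the derivative of `y ↦ y / ‖y‖` at `(λ + α) x` is `(I - x xᵀ) / (λ + α)`,
and `xᵀ A x^{m-2} = λ xᵀ` turns the product into the stated matrix.
-/

open Matrix

section Tensor

variable {m n : ℕ}

theorem Symm.comp_cons {A : (Fin (m+1) → Fin n) → ℝ} (hA : Symm A) (j : Fin n) :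
    Symm (fun i : Fin m → Fin n => A (Fin.cons j i)) := by
  intro σ i
  convert hA (Equiv.Perm.decomposeFin.symm (0, σ)) (Fin.cons j i) using 2
  ext l
  induction l using Fin.cases <;>
    simp [Equiv.Perm.decomposeFin_symm_apply_zero, Equiv.Perm.decomposeFin_symm_apply_succ]

theorem Symm.sum_mul_comp_perm {B : (Fin m → Fin n) → ℝ} (hB : Symm B)
    (σ : Equiv.Perm (Fin m)) (F : (Fin m → Fin n) → ℝ) :
    ∑ i, B i * F (i ∘ σ) = ∑ i, B i * F i := by
  rw [← (Equiv.arrowCongr σ (Equiv.refl (Fin n))).sum_comp]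
  refine Finset.sum_congr rfl fun i _ => ?_
  have hσ : (Equiv.arrowCongr σ (Equiv.refl (Fin n))) i ∘ σ = i := by
    ext l; simp
  rw [hσ, ← hB σ, hσ]

theorem transpose_tmat {A : (Fin (m+2) → Fin n) → ℝ} (hA : Symm A) (x : En n) :
    (tmat A x)ᵀ = tmat A x := by
  ext j k
  refine Finset.sum_congr rfl fun i _ => ?_
  rw [← hA (Equiv.swap 0 1)]
  congr 2
  ext l
  induction l using Fin.cases with
  | zero => simp
  | succ l =>
    induction l using Fin.cases with
    | zero => simp
    | succ l =>
      simp [Equiv.swap_apply_of_ne_of_ne (Fin.succ_ne_zero _) (Fin.succ_succ_ne_one _)]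

theorem sum_mul_prod_erase_zero (B : (Fin (m+1) → Fin n) → ℝ) (x v : En n) :
    ∑ i, B i * ((∏ l ∈ Finset.univ.erase 0, x (i l)) * v (i 0)) = ∑ c, tvec B x c * v c := by
  rw [← (Fin.consEquiv fun _ => Fin n).sum_comp, Fintype.sum_prod_type]
  refine Finset.sum_congr rfl fun c _ => ?_
  simp [Fin.consEquiv, tvec, Finset.sum_mul, Fin.univ_succ, mul_assoc]

theorem tmul_eq_sum_tvec_mul (B : (Fin (m+1) → Fin n) → ℝ) (x : En n) :
    tmul B x = ∑ c, tvec B x c * x c := by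
  rw [← sum_mul_prod_erase_zero]
  simp only [tmul, Finset.prod_erase_mul _ _ (Finset.mem_univ _)]

theorem ofLp_tvec (A : (Fin (m+2) → Fin n) → ℝ) (x : En n) :
    (tvec A x).ofLp = tmat A x *ᵥ x.ofLp := by
  ext j
  exact tmul_eq_sum_tvec_mul (fun i => A (Fin.cons j i)) x

theorem vecMul_tmat {A : (Fin (m+2) → Fin n) → ℝ} (hA : Symm A) (x : En n) :
    x.ofLp ᵥ* tmat A x = (tvec A x).ofLp := by
  rw [← mulVec_transpose, transpose_tmat hA, ofLp_tvec]

end Tensor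

theorem Finset.prod_univ_erase_comp_swap {α M : Type*} [Fintype α] [DecidableEq α]
    [CommMonoid M] (f : α → M) (a b : α) :
    ∏ l ∈ univ.erase b, f (Equiv.swap a b l) = ∏ l ∈ univ.erase a, f l := by
  refine prod_equiv (Equiv.swap a b) (fun l => ?_) (fun _ _ => rfl)
  simp only [mem_erase, mem_univ, and_true, ne_eq]
  rw [Equiv.swap_apply_eq_iff, Equiv.swap_apply_left]

section Derivatives

variable {m n : ℕ}

theorem hasFDerivAt_tmul {B : (Fin (m+1) → Fin n) → ℝ} (hB : Symm B) (x : En n) :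
    HasFDerivAt (tmul B) (((m : ℝ) + 1) • innerSL ℝ (tvec B x)) x := by
  have hprod (i : Fin (m+1) → Fin n) : HasFDerivAt (fun y : En n => ∏ k, y (i k))
      (∑ k, (∏ l ∈ Finset.univ.erase k, x (i l)) • (EuclideanSpace.proj (i k) : En n →L[ℝ] ℝ)) x :=
    HasFDerivAt.finsetProd fun k _ => (EuclideanSpace.proj (i k) : En n →L[ℝ] ℝ).hasFDerivAt
  refine (HasFDerivAt.fun_sum fun i _ => (hprod i).const_mul (B i)).congr_fderiv ?_
  refine ContinuousLinearMap.ext fun v => ?_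
  -- Symmetry moves the differentiated slot `k` to slot `0`, so all `m + 1` slots contribute alike.
  have hslot (k : Fin (m+1)) :
      ∑ i, B i * ((∏ l ∈ Finset.univ.erase k, x (i l)) * v (i k)) = ∑ c, tvec B x c * v c := by
    rw [← sum_mul_prod_erase_zero, ← hB.sum_mul_comp_perm (Equiv.swap 0 k)]
    refine Finset.sum_congr rfl fun i _ => ?_
    simp only [Function.comp_apply, Equiv.swap_apply_right,
      Finset.prod_univ_erase_comp_swap fun l => x (i l)]
  simp only [_root_.sum_apply, _root_.smul_apply, PiLp.proj_apply, smul_eq_mul, Finset.mul_sum]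
  rw [Finset.sum_comm, Finset.sum_congr rfl fun k _ => hslot k, Finset.sum_const, Finset.card_univ,
    Fintype.card_fin, nsmul_eq_mul, innerSL_apply_apply, PiLp.inner_apply]
  simp [mul_comm]

theorem hasFDerivAt_tvec {A : (Fin (m+2) → Fin n) → ℝ} (hA : Symm A) (x : En n) :
    HasFDerivAt (tvec A) (toEuclideanLin (((m : ℝ) + 1) • tmat A x)).toContinuousLinearMap x := by
  rw [← hasFDerivWithinAt_univ, hasFDerivWithinAt_piLp]
  intro j
  rw [hasFDerivWithinAt_univ]
  refine (hasFDerivAt_tmul (hA.comp_cons j) x).congr_fderiv (ContinuousLinearMap.ext fun v => ?_)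
  simp [PiLp.inner_apply, mulVec, dotProduct, Finset.mul_sum, mul_comm, tvec, tmat]

theorem hasFDerivAt_tvec_add_smul {A : (Fin (m+2) → Fin n) → ℝ} (hA : Symm A)
    (α : ℝ) (x : En n) :
    HasFDerivAt (fun y : En n => tvec A y + α • y)
      (toEuclideanLin (((m : ℝ) + 1) • tmat A x + α • 1)).toContinuousLinearMap x := by
  refine ((hasFDerivAt_tvec hA x).add ((hasFDerivAt_id x).const_smul α)).congr_fderiv ?_
  ext v j
  simp

end Derivatives

theorem hasFDerivAt_norm_inv_smul {E : Type*} [NormedAddCommGroup E] [InnerProductSpace ℝ E]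
    {z : E} (hz : z ≠ 0) :
    HasFDerivAt (fun y : E => ‖y‖⁻¹ • y)
      (‖z‖⁻¹ • ContinuousLinearMap.id ℝ E - (‖z‖ ^ 3)⁻¹ • (innerSL ℝ z).smulRight z) z := by
  have hpos : 0 < ‖z‖ ^ 2 := by positivity
  have hinv : HasDerivAt (fun t : ℝ => (√t)⁻¹)
      (-(1 / (2 * √(‖z‖ ^ 2))) / √(‖z‖ ^ 2) ^ 2) (‖z‖ ^ 2) :=
    (Real.hasDerivAt_sqrt hpos.ne').inv (by positivity)
  have hnorm := (hinv.comp_hasFDerivAt z (hasFDerivAt_id z).norm_sq).smul (hasFDerivAt_id z)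
  simp only [Real.sqrt_sq (norm_nonneg _), Function.comp_def, id] at hnorm
  refine hnorm.congr_fderiv (ContinuousLinearMap.ext fun v => ?_)
  have hz' : ‖z‖ ≠ 0 := norm_ne_zero_iff.mpr hz
  simp only [_root_.add_apply, _root_.sub_apply, _root_.smul_apply,
    ContinuousLinearMap.smulRight_apply, ContinuousLinearMap.comp_id, innerSL_apply_apply, smul_eq_mul]
  match_scalars
  · ring
  · field_simp
    ring

theorem hasFDerivAt_norm_inv_smul_of_norm_eq_one {n : ℕ} {x : En n} (hx : ‖x‖ = 1) {c : ℝ}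
    (hc : 0 < c) :
    HasFDerivAt (fun y : En n => ‖y‖⁻¹ • y)
      (toEuclideanLin (c⁻¹ • (1 - vecMulVec x.ofLp x.ofLp))).toContinuousLinearMap (c • x) := by
  have hcx : c • x ≠ 0 := smul_ne_zero hc.ne' (norm_ne_zero_iff.mp (by simp [hx]))
  refine (hasFDerivAt_norm_inv_smul hcx).congr_fderiv (ContinuousLinearMap.ext fun v => ?_)
  ext j
  have hinner : inner ℝ x v = ∑ i, x i * v i := by simp [PiLp.inner_apply, mul_comm]
  simp [norm_smul, hx, abs_of_pos hc, mulVec, dotProduct, vecMulVec, hinner, mul_assoc,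
    ← Finset.mul_sum]
  field_simp

theorem toEuclideanLin_mul_toContinuousLinearMap {ι 𝕜 : Type*} [Fintype ι] [DecidableEq ι]
    [RCLike 𝕜] (M N : Matrix ι ι 𝕜) :
    (toEuclideanLin (M * N)).toContinuousLinearMap
      = (toEuclideanLin M).toContinuousLinearMap.comp (toEuclideanLin N).toContinuousLinearMap := by
  ext v j
  simp [mulVec_mulVec]

theorem one_sub_vecMulVec_mul {ι R : Type*} [Fintype ι] [DecidableEq ι] [CommRing R]
    {x : ι → R} {T : Matrix ι ι R} {lam : R} (hxT : x ᵥ* T = lam • x) (a b : R) :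
    (1 - vecMulVec x x) * (a • T + b • 1)
      = a • (T - lam • vecMulVec x x) + b • (1 - vecMulVec x x) := by
  rw [sub_mul, one_mul, mul_add, mul_smul_comm, mul_smul_comm, mul_one, vecMulVec_mul, hxT,
    vecMulVec_smul]
  module

section SpectralBound

variable {n : ℕ}

theorem abs_apply_le_one {y : En n} (hy : ‖y‖ = 1) (j : Fin n) : |y j| ≤ 1 := by
  simpa [hy] using PiLp.norm_apply_le y j

theorem quadForm_eq_dotProduct (M : Matrix (Fin n) (Fin n) ℝ) (y : En n) :
    quadForm M y = y.ofLp ⬝ᵥ (M *ᵥ y.ofLp) := by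
  simp [quadForm, dotProduct, mulVec, Finset.mul_sum, mul_assoc]

theorem abs_quadForm_le (M : Matrix (Fin n) (Fin n) ℝ) {y : En n} (hy : ‖y‖ = 1) :
    |quadForm M y| ≤ ∑ j, ∑ k, |M j k| := by
  refine (Finset.abs_sum_le_sum_abs _ _).trans <| Finset.sum_le_sum fun j _ =>
    (Finset.abs_sum_le_sum_abs _ _).trans <| Finset.sum_le_sum fun k _ => ?_
  rw [abs_mul, abs_mul]
  have hyj := abs_apply_le_one hy j
  have hyk := abs_apply_le_one hy k
  calc |y j| * |M j k| * |y k| ≤ 1 * |M j k| * 1 := by gcongr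
    _ = |M j k| := by ring

theorem le_srad (M : Matrix (Fin n) (Fin n) ℝ) {y : En n} (hy : ‖y‖ = 1) :
    |quadForm M y| ≤ srad M := by
  refine le_ciSup (f := fun y : sphere (0 : En n) 1 => |quadForm M y|) ⟨∑ j, ∑ k, |M j k|, ?_⟩
    ⟨y, by simpa using hy⟩
  rintro _ ⟨z, rfl⟩
  exact abs_quadForm_le M (by simp)

theorem srad_le (M : Matrix (Fin n) (Fin n) ℝ) : srad M ≤ ∑ j, ∑ k, |M j k| :=
  Real.iSup_le (fun y => abs_quadForm_le M (by simp)) (by positivity)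

variable {m : ℕ}

theorem abs_tmat_le (A : (Fin (m+2) → Fin n) → ℝ) {z : En n} (hz : ‖z‖ = 1) (j k : Fin n) :
    |tmat A z j k| ≤ ∑ i : Fin m → Fin n, |A (Fin.cons j (Fin.cons k i))| := by
  refine (Finset.abs_sum_le_sum_abs _ _).trans <| Finset.sum_le_sum fun i _ => ?_
  rw [abs_mul, Finset.abs_prod]
  exact mul_le_of_le_one_right (abs_nonneg _)
    (Finset.prod_le_one (fun _ _ => abs_nonneg _) fun l _ => abs_apply_le_one hz _)

theorem srad_tmat_le_iSup (A : (Fin (m+2) → Fin n) → ℝ) {x : En n} (hx : ‖x‖ = 1) :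
    srad (tmat A x) ≤ ⨆ z : sphere (0 : En n) 1, srad (tmat A z) := by
  refine le_ciSup (f := fun z : sphere (0 : En n) 1 => srad (tmat A z))
    ⟨∑ j, ∑ k, ∑ i : Fin m → Fin n, |A (Fin.cons j (Fin.cons k i))|, ?_⟩ ⟨x, by simpa using hx⟩
  rintro _ ⟨z, rfl⟩
  exact (srad_le _).trans <| Finset.sum_le_sum fun j _ => Finset.sum_le_sum fun k _ =>
    abs_tmat_le A (by simp) j k

theorem abs_le_beta_of_eigenpair {A : (Fin (m+2) → Fin n) → ℝ} {lam : ℝ} {x : En n}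
    (hx : ‖x‖ = 1) (heig : tvec A x = lam • x) : |lam| ≤ beta A := by
  have hxx : x.ofLp ⬝ᵥ x.ofLp = 1 := by
    have h := real_inner_self_eq_norm_sq x
    rwa [EuclideanSpace.inner_eq_star_dotProduct, star_trivial, hx, one_pow] at h
  have hquad : quadForm (tmat A x) x = lam := by
    rw [quadForm_eq_dotProduct, ← ofLp_tvec, heig, WithLp.ofLp_smul, dotProduct_smul, hxx,
      smul_eq_mul, mul_one]
  have hsup : |lam| ≤ ⨆ z : sphere (0 : En n) 1, srad (tmat A z) :=
    (hquad ▸ le_srad _ hx).trans (srad_tmat_le_iSup A hx)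
  calc |lam| ≤ ⨆ z : sphere (0 : En n) 1, srad (tmat A z) := hsup
    _ ≤ ((m : ℝ) + 1) * ⨆ z : sphere (0 : En n) 1, srad (tmat A z) :=
      le_mul_of_one_le_left ((abs_nonneg _).trans hsup) (by linarith [m.cast_nonneg (α := ℝ)])
    _ = beta A := rfl

end SpectralBound

/-- At an eigenpair (λ,x) with α > β(A), x is a fixed point of the SS-HOPM map φ and
the Jacobian of φ at x is [(m-1)(A x^{m-2} - λxxᵀ) + α(I - xxᵀ)]/(λ+α). -/
theorem stmt15 {m n : ℕ} (A : (Fin (m+2) → Fin n) → ℝ) (hA : Symm A)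
    (α : ℝ) (hα : α > beta A)
    (lam : ℝ) (x : En n) (hx : ‖x‖ = 1) (heig : tvec A x = lam • x) :
    (fun y : En n => ‖tvec A y + α • y‖⁻¹ • (tvec A y + α • y)) x = x ∧
    fderiv ℝ (fun y : En n => ‖tvec A y + α • y‖⁻¹ • (tvec A y + α • y)) x
      = LinearMap.toContinuousLinearMap (Matrix.toEuclideanLin
          ((lam + α)⁻¹ • (((m : ℝ) + 1) • (tmat A x - lam • Matrix.vecMulVec x x)
            + α • ((1 : Matrix (Fin n) (Fin n) ℝ) - Matrix.vecMulVec x x)))) := by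
  have hpos : 0 < lam + α := by
    linarith [neg_abs_le lam, abs_le_beta_of_eigenpair hx heig]
  have hgx : tvec A x + α • x = (lam + α) • x := by rw [heig, add_smul]
  refine ⟨?_, ?_⟩
  · simp only [hgx, norm_smul, hx, Real.norm_of_nonneg hpos.le, mul_one, smul_smul,
      inv_mul_cancel₀ hpos.ne', one_smul]
  have hxT : x.ofLp ᵥ* tmat A x = lam • x.ofLp := by rw [vecMul_tmat hA, heig, WithLp.ofLp_smul]
  have hnormalize := hasFDerivAt_norm_inv_smul_of_norm_eq_one hx hpos
  rw [← hgx] at hnormalize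
  have hφ : HasFDerivAt (fun y : En n => ‖tvec A y + α • y‖⁻¹ • (tvec A y + α • y)) _ x :=
    hnormalize.comp (g := fun y : En n => ‖y‖⁻¹ • y) x (hasFDerivAt_tvec_add_smul hA α x)
  rw [hφ.fderiv, ← one_sub_vecMulVec_mul hxT, ← smul_mul_assoc,
    toEuclideanLin_mul_toContinuousLinearMap]
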